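/- arXiv:1010.3427 — 6 statements merged into one kernel-verified Lean document; each statement's English description precedes it below -/
import Mathlib

section
/- If S is a set of links in a metric space and P is a power assignment such that S is a p-signal set (i.e., for every link ℓ_v in S, P_v/ℓ_v^α ≥ p · P_w/d_{wv}^α for every other link ℓ_w in S), then S is q-independent for q = p^{1/α}, i.e., for any two links ℓ_v, ℓ_w in S, d_{vw} · d_{wv} ≥ q² · ℓ_v · ℓ_w. -/
/-- A p-signal set is q-independent for q = p^(1/α). -/
theorem stmt0 {X : Type*} [MetricSpace X] {ι : Type*} (S : Set ι)
    (s r : ι → X) (P : ι → ℝ) (α p : ℝ) (hα : 0 < α) (hp : 1 ≤ p)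
    (hP : ∀ v, 0 < P v)
    (hlen : ∀ v ∈ S, 0 < dist (s v) (r v))
    (hdpos : ∀ v ∈ S, ∀ w ∈ S, v ≠ w → 0 < dist (s w) (r v))
    (hsig : ∀ v ∈ S, ∀ w ∈ S, v ≠ w →
      P v / dist (s v) (r v) ^ α ≥ p * (P w / dist (s w) (r v) ^ α)) :
    ∀ v ∈ S, ∀ w ∈ S, v ≠ w →
      dist (s v) (r w) * dist (s w) (r v) ≥
        (p ^ (1/α)) ^ 2 * (dist (s v) (r v) * dist (s w) (r w)) := by
  intro v hv w hw hvw
  set a := dist (s v) (r v) with ha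
  set b := dist (s w) (r w) with hb
  set c := dist (s v) (r w) with hc
  set e := dist (s w) (r v) with he
  have hap : 0 < a := hlen v hv
  have hbp : 0 < b := hlen w hw
  have hcp : 0 < c := hdpos w hw v hv hvw.symm
  have hep : 0 < e := hdpos v hv w hw hvw
  have h1 := hsig v hv w hw hvw
  have h2 := hsig w hw v hv hvw.symm
  rw [← ha, ← he] at h1
  rw [← hb, ← hc] at h2
  have hpp : 0 < p := lt_of_lt_of_le one_pos hp
  have hPv := hP v
  have hPw := hP w
  have haa : (0:ℝ) < a ^ α := Real.rpow_pos_of_pos hap α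
  have hba : (0:ℝ) < b ^ α := Real.rpow_pos_of_pos hbp α
  have hca : (0:ℝ) < c ^ α := Real.rpow_pos_of_pos hcp α
  have hea : (0:ℝ) < e ^ α := Real.rpow_pos_of_pos hep α
  have h1' : p * P w * a ^ α ≤ P v * e ^ α := by
    rw [ge_iff_le, mul_div_assoc', div_le_div_iff₀ hea haa] at h1
    exact h1
  have h2' : p * P v * b ^ α ≤ P w * c ^ α := by
    rw [ge_iff_le, mul_div_assoc', div_le_div_iff₀ hca hba] at h2
    exact h2
  have key : p ^ (2:ℝ) * (a * b) ^ α ≤ (c * e) ^ α := by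
    have hmul : (p * P w * a ^ α) * (p * P v * b ^ α) ≤
        (P v * e ^ α) * (P w * c ^ α) :=
      mul_le_mul h1' h2'
        (by positivity) (by positivity)
    have hPvw : 0 < P v * P w := mul_pos hPv hPw
    have h3 : P v * P w * (p ^ (2:ℝ) * (a * b) ^ α) ≤
        P v * P w * ((c * e) ^ α) := by
      rw [Real.mul_rpow hcp.le hep.le, Real.mul_rpow hap.le hbp.le,
        Real.rpow_two]
      nlinarith
    exact le_of_mul_le_mul_left h3 hPvw
  have hroot := Real.rpow_le_rpow (by positivity) key
    (le_of_lt (by positivity : (0:ℝ) < 1/α))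
  have h3 : ((c * e) ^ α) ^ (1/α) = c * e := by
    rw [← Real.rpow_mul (by positivity), mul_one_div, div_self hα.ne',
      Real.rpow_one]
  have h4 : ((a * b) ^ α) ^ (1/α) = a * b := by
    rw [← Real.rpow_mul (by positivity), mul_one_div, div_self hα.ne',
      Real.rpow_one]
  have h5 : (p ^ (2:ℝ)) ^ (1/α) = (p ^ (1/α)) ^ 2 := by
    rw [← Real.rpow_natCast (p ^ (1/α)) 2, ← Real.rpow_mul hpp.le,
      ← Real.rpow_mul hpp.le]
    norm_num
    congr 1
    ring
  rw [Real.mul_rpow (by positivity) (by positivity), h3, h4, h5] at hroot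
  exact hroot
end

section
/- Let L be a set of links in a metric space whose lengths all lie in [d, 2d). If two links ℓ_u and ℓ_w satisfy d_{uw} · d_{wu} < q² · ℓ_u · ℓ_w for some q ≥ 1, then the distance between their senders satisfies d(s_u, s_w) < 2(q+1)·d (i.e., adjacency in G_q(L) implies adjacency in U_{2(q+1)}(L)). -/
/-- For nearly-equilength links (lengths in [d,2d)), d_{uw}·d_{wu} < q²·ℓ_u·ℓ_w
implies d(s_u,s_w) < 2(q+1)d. -/
theorem stmt3 {X : Type*} [MetricSpace X] (su ru sw rw : X) (d q : ℝ)
    (hd : 0 < d) (hq : 1 ≤ q)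
    (hu : dist su ru ∈ Set.Ico d (2 * d))
    (hw : dist sw rw ∈ Set.Ico d (2 * d))
    (h : dist su rw * dist sw ru < q ^ 2 * (dist su ru * dist sw rw)) :
    dist su sw < 2 * (q + 1) * d := by
  obtain ⟨hu1, hu2⟩ := hu
  obtain ⟨hw1, hw2⟩ := hw
  have t1 : dist su sw ≤ dist su rw + dist sw rw := by
    calc dist su sw ≤ dist su rw + dist rw sw := dist_triangle _ _ _
    _ = dist su rw + dist sw rw := by rw [dist_comm rw sw]
  have t2 : dist su sw ≤ dist sw ru + dist su ru := by
    calc dist su sw ≤ dist su ru + dist ru sw := dist_triangle _ _ _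
    _ = dist sw ru + dist su ru := by rw [dist_comm ru sw]; ring
  -- min(duw, dwu) < 2qd
  have hprod : dist su rw * dist sw ru < 4 * q ^ 2 * d ^ 2 := by
    have := mul_lt_mul'' hu2 hw2 dist_nonneg dist_nonneg
    nlinarith [sq_nonneg q]
  rcases le_total (dist su rw) (dist sw ru) with hle | hle
  · have : dist su rw < 2 * q * d := by
      by_contra hc
      push_neg at hc
      have : (2*q*d)*(2*q*d) ≤ dist su rw * dist sw ru :=
        mul_le_mul hc (hc.trans hle) (by positivity) dist_nonneg
      nlinarith
    linarith
  · have : dist sw ru < 2 * q * d := by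
      by_contra hc
      push_neg at hc
      have : (2*q*d)*(2*q*d) ≤ dist su rw * dist sw ru := by
        exact mul_le_mul (hc.trans hle) hc (by positivity) dist_nonneg
      nlinarith
    linarith
end

section
/- Suppose two links ℓ_v and ℓ_w satisfy d_{wv} = d_{vw}. Then under the mean power assignment, a_w(v) = a_v(w). Conversely, if a power assignment of the form P_v = f(ℓ_v) for a function f satisfies a_w(v) = a_v(w) for all pairs of links with d_{wv} = d_{vw} and arbitrary positive lengths and distances, then f(x)/x^{α/2} is constant. -/
/-- Mean power makes affectance symmetric when d_{wv} = d_{vw}, and conversely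
any oblivious power assignment with this symmetry property is a constant
multiple of the mean assignment. -/
theorem stmt6 (α : ℝ) (hα : 0 < α) :
    (∀ lv lw dd : ℝ, 0 < lv → 0 < lw → 0 < dd →
      (lw ^ (α / 2) / dd ^ α) / (lv ^ (α / 2) / lv ^ α)
        = (lv ^ (α / 2) / dd ^ α) / (lw ^ (α / 2) / lw ^ α)) ∧
    (∀ f : ℝ → ℝ, (∀ x, 0 < x → 0 < f x) →
      (∀ lv lw dd : ℝ, 0 < lv → 0 < lw → 0 < dd →
        (f lw / dd ^ α) / (f lv / lv ^ α) = (f lv / dd ^ α) / (f lw / lw ^ α)) →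
      ∃ c : ℝ, ∀ x, 0 < x → f x / x ^ (α / 2) = c) := by
  have hsplit : ∀ x : ℝ, 0 < x → x ^ α = x ^ (α / 2) * x ^ (α / 2) := by
    intro x hx
    rw [← Real.rpow_add hx]
    ring_nf
  constructor
  · intro lv lw dd hlv hlw hdd
    have h1 : (0:ℝ) < lv ^ (α / 2) := Real.rpow_pos_of_pos hlv _
    have h2 : (0:ℝ) < lw ^ (α / 2) := Real.rpow_pos_of_pos hlw _
    have h3 : (0:ℝ) < dd ^ α := Real.rpow_pos_of_pos hdd _
    rw [hsplit lv hlv, hsplit lw hlw]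
    field_simp
  · intro f hf h
    refine ⟨f 1, fun x hx => ?_⟩
    have key := h x 1 1 hx one_pos one_pos
    simp only [Real.one_rpow, div_one] at key
    have hfx := hf x hx
    have hf1 := hf 1 one_pos
    have hxp : (0:ℝ) < x ^ α := Real.rpow_pos_of_pos hx _
    have hxh : (0:ℝ) < x ^ (α / 2) := Real.rpow_pos_of_pos hx _
    -- key : f 1 / (f x / x ^ α) = f x / (f 1 / 1) ... check form
    have hsq : f x * f x = f 1 * f 1 * x ^ α := by
      field_simp at key
      nlinarith [key]
    have heq : f x * f x = (f 1 * x ^ (α / 2)) * (f 1 * x ^ (α / 2)) := by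
      rw [hsq, hsplit x hx]; ring
    have : f x = f 1 * x ^ (α / 2) := by
      nlinarith [mul_pos hf1 hxh]
    rw [this]
    field_simp
end

section
/- Let τ > 0, Λ = 2τ^{2/α}, and let ℓ_v, ℓ_w, ℓ_{w'} be links in a metric space with ℓ_w ≥ ℓ_{w'} > Λ·ℓ_v, such that ℓ_w and ℓ_{w'} each affect ℓ_v by at least 1/τ under mean power (i.e., (√(ℓ_v ℓ_u)/d_{uv})^α ≥ 1/τ for u ∈ {w, w'}). If ℓ_w and ℓ_{w'} are 3-independent (d_{w'w}·d_{ww'} ≥ 9·ℓ_w·ℓ_{w'}), then ℓ_w ≥ 2·ℓ_{w'}²/(Λ·ℓ_v). -/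
private lemma aff_dist {α τ s d : ℝ} (hα : 1 ≤ α) (hτ : 0 < τ) (hs : 0 ≤ s)
    (hd : 0 < d) (haff : (s / d) ^ α ≥ 1 / τ) : d ≤ s * τ ^ (1 / α) := by
  have hα0 : 0 < α := lt_of_lt_of_le one_pos hα
  have ht : 0 < τ ^ (1 / α) := Real.rpow_pos_of_pos hτ _
  have h1 : (1 / τ) ^ (1 / α) ≤ ((s / d) ^ α) ^ (1 / α) :=
    Real.rpow_le_rpow (by positivity) haff (by positivity)
  have h2 : ((s / d) ^ α) ^ (1 / α) = s / d := by
    rw [← Real.rpow_mul (by positivity), mul_one_div, div_self hα0.ne', Real.rpow_one]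
  have h3 : (1 / τ) ^ (1 / α) = 1 / τ ^ (1 / α) := by
    rw [Real.div_rpow zero_le_one hτ.le, Real.one_rpow]
  rw [h2, h3] at h1
  rw [div_le_div_iff₀ ht hd] at h1
  linarith

/-- Two long 3-independent links that are both 1/τ-close to a short link ℓ_v
under mean power satisfy ℓ_w ≥ 2ℓ_{w'}²/(Λℓ_v), where Λ = 2τ^(2/α). -/
theorem stmt7 {X : Type*} [MetricSpace X] (sv rv sw rw sw' rw' : X)
    (α τ : ℝ) (hα : 1 ≤ α) (hτ : 0 < τ)
    (lv lw lw' Λ : ℝ)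
    (hlv : lv = dist sv rv) (hlw : lw = dist sw rw) (hlw' : lw' = dist sw' rw')
    (hlvpos : 0 < lv)
    (hΛ : Λ = 2 * τ ^ (2 / α))
    (horder : lw' ≤ lw) (hsep : Λ * lv < lw')
    (hdw : 0 < dist sw rv) (hdw' : 0 < dist sw' rv)
    (haffw : (Real.sqrt (lv * lw) / dist sw rv) ^ α ≥ 1 / τ)
    (haffw' : (Real.sqrt (lv * lw') / dist sw' rv) ^ α ≥ 1 / τ)
    (hind : dist sw' rw * dist sw rw' ≥ 9 * (lw * lw')) :
    lw ≥ 2 * lw' ^ 2 / (Λ * lv) := by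
  have hα0 : 0 < α := lt_of_lt_of_le one_pos hα
  set t : ℝ := τ ^ (1 / α) with htdef
  have ht : 0 < t := Real.rpow_pos_of_pos hτ _
  have hΛpos : 0 < Λ := by
    rw [hΛ]; positivity
  have hlw'pos : 0 < lw' := lt_trans (by positivity) hsep
  have hlwpos : 0 < lw := lt_of_lt_of_le hlw'pos horder
  have htt : t * t = Λ / 2 := by
    rw [htdef, ← Real.rpow_add hτ, hΛ]
    ring_nf
  -- distance bounds
  have hA : dist sw rv ≤ Real.sqrt (lv * lw) * t :=
    aff_dist hα hτ (Real.sqrt_nonneg _) hdw haffw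
  have hB : dist sw' rv ≤ Real.sqrt (lv * lw') * t :=
    aff_dist hα hτ (Real.sqrt_nonneg _) hdw' haffw'
  set A := Real.sqrt (lv * lw) * t with hAdef
  set B := Real.sqrt (lv * lw') * t with hBdef
  have hApos : 0 < A := by
    have : 0 < Real.sqrt (lv * lw) := Real.sqrt_pos.mpr (by positivity)
    positivity
  have hBA : B ≤ A := by
    apply mul_le_mul_of_nonneg_right _ ht.le
    exact Real.sqrt_le_sqrt (mul_le_mul_of_nonneg_left horder hlvpos.le)
  have hAsq : A ^ 2 = lv * lw * (Λ / 2) := by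
    rw [hAdef, mul_pow, Real.sq_sqrt (by positivity), sq, htt]
  -- A < lw since A² = lv·lw·Λ/2 < lw'·lw/2 ≤ lw²
  have hAlw : A < lw := by
    have h1 : A ^ 2 < lw ^ 2 := by
      rw [hAsq]
      nlinarith [mul_lt_mul_of_pos_right hsep hlwpos, mul_le_mul_of_nonneg_right horder hlwpos.le]
    exact lt_of_pow_lt_pow_left₀ 2 hlwpos.le h1
  -- triangle inequalities
  have htri1 : dist sw' rw ≤ B + dist sw rv + lw := by
    calc dist sw' rw ≤ dist sw' rv + dist rv rw := dist_triangle _ _ _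
    _ ≤ dist sw' rv + (dist rv sw + dist sw rw) := by
        have := dist_triangle rv sw rw; linarith
    _ = dist sw' rv + dist sw rv + lw := by rw [dist_comm rv sw, hlw]; ring
    _ ≤ B + dist sw rv + lw := by linarith
  have htri2 : dist sw rw' ≤ A + dist sw' rv + lw' := by
    calc dist sw rw' ≤ dist sw rv + dist rv rw' := dist_triangle _ _ _
    _ ≤ dist sw rv + (dist rv sw' + dist sw' rw') := by
        have := dist_triangle rv sw' rw'; linarith
    _ = dist sw rv + dist sw' rv + lw' := by rw [dist_comm rv sw', hlw']; ring
    _ ≤ A + dist sw' rv + lw' := by linarith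
  have hd1 : dist sw' rw ≤ 3 * lw := by
    have := hA; linarith
  have hd2 : dist sw rw' ≤ lw' + 2 * A := by
    have := hB; linarith
  -- combine with independence: 9 lw lw' ≤ 3 lw (lw' + 2A) ⇒ lw' ≤ A
  have hkey : lw' ≤ A := by
    have h0 : (0:ℝ) ≤ dist sw rw' := dist_nonneg
    have h1 : 9 * (lw * lw') ≤ 3 * lw * (lw' + 2 * A) := by
      calc 9 * (lw * lw') ≤ dist sw' rw * dist sw rw' := hind
      _ ≤ 3 * lw * (lw' + 2 * A) := by
          apply mul_le_mul hd1 hd2 h0 (by linarith)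
    have h2 : (6 * lw) * lw' ≤ (6 * lw) * A := by nlinarith [h1]
    exact le_of_mul_le_mul_left h2 (by positivity)
  -- square
  have hsq : lw' ^ 2 ≤ lv * lw * (Λ / 2) := by
    rw [← hAsq]; exact pow_le_pow_left₀ hlw'pos.le hkey 2
  rw [ge_iff_le, div_le_iff₀ (by positivity)]
  calc 2 * lw' ^ 2 ≤ 2 * (lv * lw * (Λ / 2)) := by linarith
  _ = lw * (Λ * lv) := by ring
end

section
/- In the bidirectional setting (where d_{uv} = d_{vu} is the minimum distance among all four endpoint pairs of the two links, and in particular satisfies the triangle inequality d_{w'w} ≤ d_{wv} + d_{vw'}), let S be a 2-independent set of links and ℓ_v a link. Then there is at most one link ℓ_w in S with ℓ_w > 2τ^{2/α}·ℓ_v satisfying d_{wv} ≤ τ^{1/α}·√(ℓ_v ℓ_w). -/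
/-- Bidirectional: in a 2-independent set S, at most one link ℓ_w with
ℓ_w > 2τ^(2/α)·ℓ_v is 1/τ-close to ℓ_v under mean power. -/
theorem stmt9 {ι : Type*} (S : Set ι) (v : ι) (len : ι → ℝ) (D : ι → ι → ℝ)
    (α τ : ℝ) (hα : 1 ≤ α) (hτ : 0 < τ)
    (hpos : ∀ u, 0 < len u)
    (hsymm : ∀ a b, D a b = D b a)
    (htri : ∀ a b c, D a c ≤ D a b + D b c)
    (hDnn : ∀ a b, 0 ≤ D a b)
    (hind : ∀ a ∈ S, ∀ b ∈ S, a ≠ b → (D a b) ^ 2 ≥ 4 * (len a * len b)) :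
    ∀ w ∈ S, ∀ w' ∈ S,
      len w > 2 * τ ^ (2 / α) * len v →
      D w v ≤ τ ^ (1 / α) * Real.sqrt (len v * len w) →
      len w' > 2 * τ ^ (2 / α) * len v →
      D w' v ≤ τ ^ (1 / α) * Real.sqrt (len v * len w') →
      w = w' := by
  intro w hw w' hw' h1 h2 h3 h4
  by_contra hne
  have key := hind w hw w' hw' hne
  set t := τ ^ (1 / α) with ht
  have ht0 : 0 < t := Real.rpow_pos_of_pos hτ _
  have h2a : τ ^ (2 / α) = t ^ 2 := by
    rw [ht, ← Real.rpow_natCast (τ ^ (1 / α)) 2, ← Real.rpow_mul hτ.le]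
    norm_num
    congr 1
    ring
  rw [h2a] at h1 h3
  have hlw := hpos w
  have hlw' := hpos w'
  have hlv := hpos v
  set a := Real.sqrt (len v * len w) with ha
  set b := Real.sqrt (len v * len w') with hb
  have ha0 : 0 ≤ a := Real.sqrt_nonneg _
  have hb0 : 0 ≤ b := Real.sqrt_nonneg _
  have ha2 : a ^ 2 = len v * len w :=
    Real.sq_sqrt (mul_nonneg hlv.le hlw.le)
  have hb2 : b ^ 2 = len v * len w' :=
    Real.sq_sqrt (mul_nonneg hlv.le hlw'.le)
  have e1 : t ^ 2 * (len v * len w) < len w * len w' / 2 := by nlinarith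
  have e2 : t ^ 2 * (len v * len w') < len w * len w' / 2 := by nlinarith
  have p1 : 0 ≤ t ^ 2 * (len v * len w) :=
    mul_nonneg (sq_nonneg t) (mul_nonneg hlv.le hlw.le)
  have p2 : 0 ≤ t ^ 2 * (len v * len w') :=
    mul_nonneg (sq_nonneg t) (mul_nonneg hlv.le hlw'.le)
  have hprod := mul_lt_mul'' e1 e2 p1 p2
  have hsq : (t ^ 2 * a * b) ^ 2 < (len w * len w' / 2) ^ 2 := by
    have hid : (t ^ 2 * a * b) ^ 2 = (t ^ 2 * a ^ 2) * (t ^ 2 * b ^ 2) := by ring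
    rw [hid, ha2, hb2]
    calc t ^ 2 * (len v * len w) * (t ^ 2 * (len v * len w')) <
        len w * len w' / 2 * (len w * len w' / 2) := hprod
      _ = (len w * len w' / 2) ^ 2 := by ring
  have hy : 0 ≤ len w * len w' / 2 := by positivity
  have ecross : t ^ 2 * a * b < len w * len w' / 2 :=
    lt_of_pow_lt_pow_left₀ 2 hy hsq
  have htw : D w w' ≤ t * a + t * b := by
    calc D w w' ≤ D w v + D v w' := htri w v w'
    _ = D w v + D w' v := by rw [hsymm v w']
    _ ≤ t * a + t * b := add_le_add h2 h4
  have hD0 : 0 ≤ D w w' := hDnn w w'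
  have hexp : (t * a + t * b) ^ 2
      = t ^ 2 * (len v * len w) + 2 * (t ^ 2 * a * b) + t ^ 2 * (len v * len w') := by
    rw [← ha2, ← hb2]; ring
  have hfin : (t * a + t * b) ^ 2 < 2 * (len w * len w') := by
    rw [hexp]; linarith
  have hDsq : (D w w') ^ 2 ≤ (t * a + t * b) ^ 2 := by
    have hnn : 0 ≤ t * a + t * b := by positivity
    exact pow_le_pow_left₀ hD0 htw 2
  have hpp := mul_pos hlw hlw'
  linarith
end

section
/- Fix α > 2, ε > 0, and consider links ℓ_1,…,ℓ_n on the real line with ℓ_i = 2^{t^{i+c₁}} where t = max(⌈(2α + log₂ c)/ε⌉, 4), with receiver r_i at position a_{i−1} and sender s_i at position −(ℓ_i − a_{i−1}), where a_i = Σ_{j=0}^i ℓ_j and ℓ_0 = 2^{t^{c₁}}. If φ is an oblivious power function satisfying φ(x) ≤ c·(x/x')^{α−ε}·φ(x') whenever x > c₀·x' (with c₁ = log₂ log₂ c₀), then for every i > j, the affectance of ℓ_j on ℓ_i under φ exceeds 1: a_j(i) = (φ(ℓ_j)/φ(ℓ_i))·(ℓ_i/d_{ji})^α > 1. Hence any schedule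 under φ requires n slots. -/
/-- Lower-bound construction: for a moderately-growing oblivious power function
φ, in the geometric chain of links on the line, every pair i > j has affectance
a_j(i) > 1; hence any schedule under φ needs n slots. -/
theorem stmt16 (α ε c c₀ c₁ t : ℝ)
    (hα : 2 < α) (hε : 0 < ε) (hc : 1 ≤ c) (hc₀ : 4 ≤ c₀)
    (hc₁ : c₁ = Real.logb 2 (Real.logb 2 c₀))
    (ht : t = max (⌈(2 * α + Real.logb 2 c) / ε⌉ : ℝ) 4)
    (n : ℕ)
    (ℓ : ℕ → ℝ) (hℓ : ∀ i : ℕ, ℓ i = 2 ^ (t ^ ((i : ℝ) + c₁)))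
    (a : ℕ → ℝ) (ha : ∀ i : ℕ, a i = ∑ j ∈ Finset.range (i + 1), ℓ j)
    (rr ss : ℕ → ℝ)
    (hr : ∀ i : ℕ, 1 ≤ i → rr i = a (i - 1))
    (hs : ∀ i : ℕ, 1 ≤ i → ss i = -(ℓ i - a (i - 1)))
    (φ : ℝ → ℝ) (hφpos : ∀ x : ℝ, 0 < x → 0 < φ x)
    (hφ : ∀ x x' : ℝ, 0 < x' → c₀ * x' < x → φ x ≤ c * (x / x') ^ (α - ε) * φ x') :
    (∀ i j : ℕ, 1 ≤ j → j < i → i ≤ n →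
      (φ (ℓ j) / φ (ℓ i)) * (ℓ i / |ss j - rr i|) ^ α > 1) ∧
    (∀ (k : ℕ) (σ : ℕ → Fin k),
      (∀ i j : ℕ, 1 ≤ j → j < i → i ≤ n → σ i = σ j →
        (φ (ℓ j) / φ (ℓ i)) * (ℓ i / |ss j - rr i|) ^ α ≤ 1) →
      n ≤ k) := by
  set L := Real.logb 2 c with hLdef
  have hL : 0 ≤ L := Real.logb_nonneg one_lt_two hc
  have hc0 : (0:ℝ) < c := lt_of_lt_of_le one_pos hc
  have hcL : (2:ℝ) ^ L = c := Real.rpow_logb two_pos (by norm_num) hc0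
  have ht4 : (4:ℝ) ≤ t := by rw [ht]; exact le_max_right _ _
  have ht0 : (0:ℝ) < t := by linarith
  have ht1 : (1:ℝ) < t := by linarith
  have hα0 : (0:ℝ) < α := by linarith
  have htε : 2*α + L ≤ ε * t := by
    have h1 : (2*α + L)/ε ≤ t := by
      rw [ht]; exact le_trans (Int.le_ceil _) (le_max_left _ _)
    calc 2*α + L = ((2*α + L)/ε)*ε := by field_simp
    _ ≤ t * ε := mul_le_mul_of_nonneg_right h1 hε.le
    _ = ε * t := mul_comm _ _
  -- c₁ facts
  have hlogc₀ : 2 ≤ Real.logb 2 c₀ := by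
    have h4 : Real.logb 2 4 = 2 := by
      rw [show (4:ℝ) = 2^(2:ℕ) by norm_num, Real.logb_pow]; simp
    have h44 : Real.logb 2 4 ≤ Real.logb 2 c₀ :=
      Real.logb_le_logb_of_le one_lt_two (by norm_num) hc₀
    linarith [h4 ▸ h44]
  have hc₁1 : 1 ≤ c₁ := by
    rw [hc₁, show (1:ℝ) = Real.logb 2 2 from (Real.logb_self_eq_one one_lt_two).symm]
    exact Real.logb_le_logb_of_le one_lt_two (by norm_num) hlogc₀
  have h2c₁ : (2:ℝ) ^ c₁ = Real.logb 2 c₀ := by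
    rw [hc₁]; exact Real.rpow_logb two_pos (by norm_num) (by linarith)
  have hc₀eq : (2:ℝ) ^ ((2:ℝ) ^ c₁) = c₀ := by
    rw [h2c₁]; exact Real.rpow_logb two_pos (by norm_num) (by linarith)
  -- the exponent function
  set T : ℕ → ℝ := fun m => t ^ ((m:ℝ) + c₁) with hT
  have hℓT : ∀ m, ℓ m = 2 ^ T m := hℓ
  have hTt : ∀ m : ℕ, T (m+1) = T m * t := by
    intro m
    have h : ((m+1:ℕ):ℝ) + c₁ = ((m:ℝ) + c₁) + 1 := by push_cast; ring
    simp only [hT, h, Real.rpow_add_one (ne_of_gt ht0), Real.rpow_one]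
  have hT4 : ∀ m : ℕ, 4 ≤ T m := by
    intro m
    have he : (1:ℝ) ≤ (m:ℝ) + c₁ := by
      have : (0:ℝ) ≤ (m:ℝ) := Nat.cast_nonneg m
      linarith
    calc (4:ℝ) = 4 ^ (1:ℝ) := (Real.rpow_one 4).symm
    _ ≤ 4 ^ ((m:ℝ) + c₁) := Real.rpow_le_rpow_of_exponent_le (by norm_num) he
    _ ≤ t ^ ((m:ℝ) + c₁) := Real.rpow_le_rpow (by norm_num) ht4 (by linarith)
  have hTmono : ∀ m m' : ℕ, m ≤ m' → T m ≤ T m' := by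
    intro m m' h
    have hmm : (m:ℝ) ≤ (m':ℝ) := Nat.cast_le.mpr h
    exact Real.rpow_le_rpow_of_exponent_le ht1.le (by linarith)
  have hℓpos : ∀ m, 0 < ℓ m := by
    intro m; rw [hℓT]; positivity
  have hℓ2 : ∀ m, 2 * ℓ m ≤ ℓ (m+1) := by
    intro m
    rw [hℓT, hℓT]
    calc 2 * (2:ℝ) ^ T m = (2:ℝ) ^ (T m + 1) := by
          rw [Real.rpow_add_one (by norm_num : (2:ℝ) ≠ 0)]; ring
    _ ≤ (2:ℝ) ^ T (m+1) := by
          apply Real.rpow_le_rpow_of_exponent_le one_le_two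
          have := hT4 m; rw [hTt]; nlinarith
  have hℓmono : ∀ m m' : ℕ, m ≤ m' → ℓ m ≤ ℓ m' := by
    intro m m' h
    rw [hℓT, hℓT]
    exact Real.rpow_le_rpow_of_exponent_le one_le_two (hTmono m m' h)
  have ha2 : ∀ m, a m ≤ 2 * ℓ m := by
    intro m
    induction m with
    | zero => rw [ha]; simp; linarith [hℓpos 0]
    | succ m ih =>
        have hstep : a (m+1) = a m + ℓ (m+1) := by
          rw [ha, ha, Finset.sum_range_succ]
        rw [hstep]
        linarith [hℓ2 m]
  have hapos : ∀ m, 0 < a m := by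
    intro m
    rw [ha]
    exact Finset.sum_pos (fun j _ => hℓpos j) (Finset.nonempty_range_iff.mpr (Nat.succ_ne_zero m))
  have h5gen : ∀ S J : ℝ, 4 ≤ S → 4 ≤ J → J ≤ S →
      L + (S*t - J)*(α-ε) + 2*S*α ≤ (S*t) * α := by
    intro S J hS hJ hJS
    rcases le_or_gt ε α with hcase | hcase
    · nlinarith [mul_le_mul_of_nonneg_right htε (by linarith : (0:ℝ) ≤ S),
        mul_nonneg hL (by linarith : (0:ℝ) ≤ S - 1),
        mul_nonneg (by linarith : (0:ℝ) ≤ α - ε) (by linarith : (0:ℝ) ≤ J)]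
    · nlinarith [mul_le_mul_of_nonneg_right htε (by linarith : (0:ℝ) ≤ S),
        mul_nonneg (mul_nonneg hε.le (by linarith : (0:ℝ) ≤ t - 4)) (by linarith : (0:ℝ) ≤ S),
        mul_nonneg (by linarith : (0:ℝ) ≤ ε - α) (by linarith : (0:ℝ) ≤ S - J),
        mul_le_mul_of_nonneg_left hS hL,
        mul_nonneg hα0.le (by linarith : (0:ℝ) ≤ S)]
  -- main pairwise claim
  have key : ∀ i j : ℕ, 1 ≤ j → j < i →
      1 < (φ (ℓ j) / φ (ℓ i)) * (ℓ i / |ss j - rr i|) ^ α := by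
    intro i j hj hji
    have hi1 : 1 ≤ i := le_trans hj hji.le
    have hji' : j ≤ i - 1 := by omega
    have hj1 : j - 1 + 1 = j := Nat.succ_pred_eq_of_pos hj
    have hi1' : i - 1 + 1 = i := Nat.succ_pred_eq_of_pos hi1
    have haj : a (j-1) ≤ ℓ j := by
      have := hℓ2 (j-1); rw [hj1] at this
      linarith [ha2 (j-1)]
    set D := ℓ j - a (j-1) + a (i-1) with hD
    have hDpos : 0 < D := by
      have := hapos (i-1); simp only [hD]; linarith
    have habs : |ss j - rr i| = D := by
      rw [hs j hj, hr i hi1, show -(ℓ j - a (j-1)) - a (i-1) = -D by rw [hD]; ring,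
        abs_neg, abs_of_pos hDpos]
    have hℓji : ℓ j ≤ ℓ (i-1) := hℓmono j (i-1) hji'
    have hDle : D ≤ 3 * ℓ (i-1) := by
      have h1 := ha2 (i-1)
      have h2 := (hapos (j-1)).le
      simp only [hD]; linarith
    have hD8 : D < 2 ^ (2 * T (i-1)) := by
      have h4 : (4:ℝ) * ℓ (i-1) = 2 ^ (2 + T (i-1)) := by
        rw [hℓT, Real.rpow_add two_pos, show (2:ℝ)^(2:ℝ) = 4 by
          rw [show (2:ℝ) = ((2:ℕ):ℝ) by norm_num, Real.rpow_natCast]; norm_num]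
      calc D ≤ 3 * ℓ (i-1) := hDle
      _ < 4 * ℓ (i-1) := by linarith [hℓpos (i-1)]
      _ = 2 ^ (2 + T (i-1)) := h4
      _ ≤ 2 ^ (2 * T (i-1)) := by
          apply Real.rpow_le_rpow_of_exponent_le one_le_two
          linarith [hT4 (i-1)]
    -- power condition
    have h2c₁Tj : (2:ℝ) ^ c₁ ≤ T j := by
      calc (2:ℝ) ^ c₁ ≤ 4 ^ c₁ := Real.rpow_le_rpow (by norm_num) (by norm_num) (by linarith)
      _ ≤ 4 ^ ((j:ℝ) + c₁) := Real.rpow_le_rpow_of_exponent_le (by norm_num)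
          (by linarith [Nat.cast_nonneg j (α := ℝ)])
      _ ≤ t ^ ((j:ℝ) + c₁) := Real.rpow_le_rpow (by norm_num) ht4
          (by linarith [Nat.cast_nonneg j (α := ℝ)])
    have hTiTj : T j * t ≤ T i := by
      rw [← hTt j]; exact hTmono (j+1) i hji
    have hc₀ℓ : c₀ * ℓ j < ℓ i := by
      rw [hℓT, hℓT, ← hc₀eq, ← Real.rpow_add two_pos]
      apply Real.rpow_lt_rpow_of_exponent_lt one_lt_two
      have hTj4 := hT4 j
      nlinarith
    have hφbd := hφ (ℓ i) (ℓ j) (hℓpos j) hc₀ℓ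
    -- core numeric inequality
    have hEi : T i = T (i-1) * t := by
      rw [← hTt (i-1), hi1']
    have h5 : L + (T i - T j)*(α-ε) + 2*T (i-1)*α ≤ T i * α := by
      rw [hEi]
      exact h5gen (T (i-1)) (T j) (hT4 (i-1)) (hT4 j) (hTmono j (i-1) hji')
    have hr0 : 0 < (ℓ i / ℓ j) ^ (α - ε) :=
      Real.rpow_pos_of_pos (div_pos (hℓpos i) (hℓpos j)) _
    have hcore : c * (ℓ i / ℓ j) ^ (α-ε) * D ^ α < ℓ i ^ α := by
      have hratio : ℓ i / ℓ j = 2 ^ (T i - T j) := by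
        rw [hℓT, hℓT, Real.rpow_sub two_pos]
      have h1 : (ℓ i / ℓ j) ^ (α-ε) = 2 ^ ((T i - T j)*(α-ε)) := by
        rw [hratio, ← Real.rpow_mul (by norm_num : (0:ℝ) ≤ 2)]
      have hDα : D ^ α < 2 ^ (2*T (i-1)*α) := by
        have h := Real.rpow_lt_rpow hDpos.le hD8 hα0
        rwa [← Real.rpow_mul (by norm_num : (0:ℝ) ≤ 2)] at h
      calc c * (ℓ i / ℓ j) ^ (α-ε) * D ^ α
          < c * (ℓ i / ℓ j) ^ (α-ε) * 2 ^ (2*T (i-1)*α) := by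
            exact mul_lt_mul_of_pos_left hDα (mul_pos hc0 hr0)
      _ = 2 ^ (L + (T i - T j)*(α-ε) + 2*T (i-1)*α) := by
            rw [h1, ← hcL, ← Real.rpow_add two_pos, ← Real.rpow_add two_pos]
      _ ≤ 2 ^ (T i * α) := Real.rpow_le_rpow_of_exponent_le one_le_two h5
      _ = ℓ i ^ α := by rw [hℓT, ← Real.rpow_mul (by norm_num : (0:ℝ) ≤ 2)]
    have p1 := hφpos (ℓ j) (hℓpos j)
    have p2 := hφpos (ℓ i) (hℓpos i)
    have hmain : φ (ℓ i) * D ^ α < φ (ℓ j) * ℓ i ^ α := by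
      calc φ (ℓ i) * D ^ α ≤ (c * (ℓ i / ℓ j) ^ (α-ε) * φ (ℓ j)) * D ^ α :=
            mul_le_mul_of_nonneg_right hφbd (Real.rpow_nonneg hDpos.le α)
      _ = (c * (ℓ i / ℓ j) ^ (α-ε) * D ^ α) * φ (ℓ j) := by ring
      _ < ℓ i ^ α * φ (ℓ j) := mul_lt_mul_of_pos_right hcore p1
      _ = φ (ℓ j) * ℓ i ^ α := mul_comm _ _
    rw [habs, Real.div_rpow (hℓpos i).le hDpos.le, div_mul_div_comm,
      one_lt_div (mul_pos p2 (Real.rpow_pos_of_pos hDpos α))]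
    exact hmain
  refine ⟨fun i j hj hji _ => key i j hj hji, ?_⟩
  intro k σ hσ
  have hcard : (Finset.Icc 1 n).card ≤ (Finset.univ : Finset (Fin k)).card := by
    apply Finset.card_le_card_of_injOn σ (fun _ _ => Finset.mem_univ _)
    intro x hx y hy hxy
    simp only [Finset.coe_Icc, Set.mem_Icc] at hx hy
    by_contra hne
    rcases Nat.lt_or_ge x y with h | h
    · exact absurd (hσ y x hx.1 h hy.2 hxy.symm) (not_le.mpr (key y x hx.1 h))
    · have h' : y < x := lt_of_le_of_ne h (fun e => hne e.symm)
      exact absurd (hσ x y hy.1 h' hx.2 hxy) (not_le.mpr (key x y hy.1 h'))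
  have hcc : (Finset.Icc 1 n).card = n := by rw [Nat.card_Icc]; omega
  have hu : (Finset.univ : Finset (Fin k)).card = k := by simp
  omega
end
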